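/- Let q₀(z,t) = z̄² (t² + |z|⁴)^{2/3} / ( |z|^{8/3} (t + i|z|²)² ) on ℍ minus the t-axis, and let γ_{x,α}(s) = ( √(e^x sin s) α e^{is/2}, e^x cos s ) for s ∈ (0,π), x ∈ ℝ, |α| = 1. Then q₀(γ_{x,α}(s)) · (γ'_{x,α,1}(s))² = 1 / (4 sin^{4/3} s) for all s ∈ (0,π), where γ_{x,α,1} is the ℂ-component. In particular each γ_{x,α} is a horizontal trajectory of q₀ and its q₀-length equals C = (1/2) ∫₀^π sin^{−2/3}(s) ds, independent of (x, α). -/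

import Mathlib

open Set Complex MeasureTheory

/-- The quadratic differential `q₀(z,t) = z̄²(t²+|z|⁴)^{2/3}/(|z|^{8/3}(t+i|z|²)²)`
on `ℍ` minus the `t`-axis. -/
noncomputable def q0 (p : ℂ × ℝ) : ℂ :=
  (starRingEnd ℂ) p.1 ^ 2 * (((p.2 ^ 2 + ‖p.1‖ ^ 4) ^ (2/3 : ℝ) : ℝ) : ℂ) /
    (((‖p.1‖ ^ (8/3 : ℝ) : ℝ) : ℂ) *
      ((p.2 : ℂ) + Complex.I * ((‖p.1‖ ^ 2 : ℝ) : ℂ)) ^ 2)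

/-- The ℂ-component of the spherical arc `γ_{x,α}(s) = (√(eˣ sin s)·α e^{is/2}, eˣ cos s)`. -/
noncomputable def sphArc1 (x : ℝ) (α : ℂ) (s : ℝ) : ℂ :=
  (Real.sqrt (Real.exp x * Real.sin s) : ℂ) * α * Complex.exp (Complex.I * s / 2)

/-- The ℝ-component of the spherical arc `γ_{x,α}`. -/
noncomputable def sphArc2 (x : ℝ) (s : ℝ) : ℝ :=
  Real.exp x * Real.cos s

/-!
Along `γ_{x,α}` the complex coordinate `w = t + i|z|²` of `ℍ` equals `eˣ e^{is}`, and the arc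
satisfies `z̄ γ₁' = w / 2`. Since `t² + |z|⁴ = |w|²`, this gives
`q₀(γ) γ₁'² = (z̄ γ₁')² |w|^{4/3} / (|z|^{8/3} w²) = |w|^{4/3} / (4 |z|^{8/3})`, which is
`1 / (4 sin^{4/3} s)` because `|w| = eˣ` and `|z|² = eˣ sin s`. The `q₀`-length integrand is the
square root of this, `sin^{-2/3} s / 2`.
-/

open ComplexConjugate

lemma sqrt_norm_mul_norm {𝕜 : Type*} [NormedDivisionRing 𝕜] (a b : 𝕜) :
    Real.sqrt ‖a‖ * ‖b‖ = Real.sqrt ‖a * b ^ 2‖ := by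
  rw [norm_mul, norm_pow, Real.sqrt_mul (norm_nonneg a), Real.sqrt_sq (norm_nonneg b)]

lemma sqrt_one_div_four_mul_rpow {σ : ℝ} (hσ : 0 < σ) :
    Real.sqrt (1 / (4 * σ ^ (4/3 : ℝ))) = 1 / 2 * σ ^ (-(2/3) : ℝ) := by
  rw [Real.sqrt_eq_iff_mul_self_eq_of_pos (by positivity), mul_mul_mul_comm, ← Real.rpow_add hσ,
    show -(2/3 : ℝ) + -(2/3) = -(4/3) by norm_num, Real.rpow_neg hσ.le]
  ring

lemma q0_mul_sq_of_conj_mul_eq {p : ℂ × ℝ} {v : ℂ} (hz : p.1 ≠ 0)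
    (hv : conj p.1 * v = (p.2 + I * ((‖p.1‖ ^ 2 : ℝ) : ℂ)) / 2) :
    q0 p * v ^ 2 = (((p.2 ^ 2 + ‖p.1‖ ^ 4) ^ (2/3 : ℝ) / (4 * ‖p.1‖ ^ (8/3 : ℝ)) : ℝ) : ℂ) := by
  have hw : (p.2 : ℂ) + I * ((‖p.1‖ ^ 2 : ℝ) : ℂ) ≠ 0 := by
    intro h
    have him := congrArg Complex.im h
    simp only [add_im, ofReal_im, mul_im, I_re, I_im, ofReal_re, zero_mul, one_mul, zero_add,
      zero_im] at him
    exact hz (norm_eq_zero.mp (pow_eq_zero_iff two_ne_zero |>.mp him))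
  have hρ : ((‖p.1‖ ^ (8/3 : ℝ) : ℝ) : ℂ) ≠ 0 := by
    exact_mod_cast (Real.rpow_pos_of_pos (norm_pos_iff.mpr hz) _).ne'
  calc q0 p * v ^ 2
      = (conj p.1 * v) ^ 2 * ((p.2 ^ 2 + ‖p.1‖ ^ 4) ^ (2/3 : ℝ) : ℝ) /
          (((‖p.1‖ ^ (8/3 : ℝ) : ℝ) : ℂ) * ((p.2 : ℂ) + I * ((‖p.1‖ ^ 2 : ℝ) : ℂ)) ^ 2) := by
        rw [q0]; ring
    _ = _ := by
        rw [hv]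
        push_cast at hw hρ ⊢
        field_simp
        ring

section SphericalArc

variable {x : ℝ} {α : ℂ} {s : ℝ}

lemma norm_sphArc1_sq (hα : ‖α‖ = 1) (hs : 0 ≤ Real.sin s) :
    ‖sphArc1 x α s‖ ^ 2 = Real.exp x * Real.sin s := by
  have hE : ‖Complex.exp (I * s / 2)‖ = 1 := by
    rw [Complex.norm_exp]; simp
  rw [sphArc1, norm_mul, norm_mul, hα, hE, Complex.norm_real,
    Real.norm_of_nonneg (Real.sqrt_nonneg _), mul_one, mul_one,
    Real.sq_sqrt (mul_nonneg (Real.exp_pos x).le hs)]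

lemma sphArc2_sq_add_norm_sphArc1_pow_four (hα : ‖α‖ = 1) (hs : 0 ≤ Real.sin s) :
    sphArc2 x s ^ 2 + ‖sphArc1 x α s‖ ^ 4 = Real.exp x ^ 2 := by
  rw [show ‖sphArc1 x α s‖ ^ 4 = (‖sphArc1 x α s‖ ^ 2) ^ 2 by ring, norm_sphArc1_sq hα hs, sphArc2]
  linear_combination Real.exp x ^ 2 * Real.sin_sq_add_cos_sq s

lemma hasDerivAt_sphArc1 (hs : 0 < Real.sin s) :
    HasDerivAt (sphArc1 x α)
      (((Real.exp x * Real.cos s / (2 * Real.sqrt (Real.exp x * Real.sin s)) : ℝ) : ℂ) * α *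
          Complex.exp (I * s / 2) +
        (Real.sqrt (Real.exp x * Real.sin s) : ℂ) * α * (Complex.exp (I * s / 2) * (I / 2))) s := by
  have hsqrt := (((Real.hasDerivAt_sin s).const_mul (Real.exp x)).sqrt
    (mul_pos (Real.exp_pos x) hs).ne').ofReal_comp
  have hexp : HasDerivAt (fun u : ℝ => Complex.exp (I * u / 2))
      (Complex.exp (I * s / 2) * (I / 2)) s := by
    simpa using ((Complex.ofRealCLM.hasDerivAt.const_mul I).div_const 2).cexp
  exact (hsqrt.mul_const α).mul hexp

lemma conj_sphArc1_mul_deriv (hα : ‖α‖ = 1) (hs : 0 < Real.sin s) :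
    conj (sphArc1 x α s) * deriv (sphArc1 x α) s
      = (sphArc2 x s + I * ((‖sphArc1 x α s‖ ^ 2 : ℝ) : ℂ)) / 2 := by
  have hαα : conj α * α = 1 := by
    rw [mul_comm, mul_conj, normSq_eq_norm_sq, hα]; norm_num
  have hEE : conj (Complex.exp (I * s / 2)) * Complex.exp (I * s / 2) = 1 := by
    rw [mul_comm, mul_conj, normSq_eq_norm_sq, Complex.norm_exp]; simp
  have hrσ : 0 < Real.exp x * Real.sin s := mul_pos (Real.exp_pos x) hs
  rw [(hasDerivAt_sphArc1 hs).deriv, norm_sphArc1_sq hα hs.le, sphArc1, sphArc2, map_mul, map_mul,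
    conj_ofReal]
  set ρ := Real.sqrt (Real.exp x * Real.sin s)
  have hρ : (ρ : ℂ) ≠ 0 := by exact_mod_cast (Real.sqrt_pos.mpr hrσ).ne'
  have hρ2 : (ρ : ℂ) ^ 2 = Real.exp x * Real.sin s := by exact_mod_cast Real.sq_sqrt hrσ.le
  set E := Complex.exp (I * s / 2)
  push_cast at hρ2 ⊢
  field_simp
  linear_combination (conj E * E * (Complex.exp x * Complex.cos s + ρ ^ 2 * I)) * hαα +
    (Complex.exp x * Complex.cos s + ρ ^ 2 * I) * hEE + I * hρ2

lemma q0_sphArc_mul_deriv_sq (hα : ‖α‖ = 1) (hs : s ∈ Ioo 0 Real.pi) :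
    q0 (sphArc1 x α s, sphArc2 x s) * deriv (sphArc1 x α) s ^ 2
      = ((1 / (4 * Real.sin s ^ (4/3 : ℝ)) : ℝ) : ℂ) := by
  have hσ : 0 < Real.sin s := Real.sin_pos_of_pos_of_lt_pi hs.1 hs.2
  have hnorm := norm_sphArc1_sq (x := x) hα hσ.le
  have hz : sphArc1 x α s ≠ 0 := by
    rw [← norm_ne_zero_iff, ← pow_ne_zero_iff two_ne_zero, hnorm]
    exact (mul_pos (Real.exp_pos x) hσ).ne'
  rw [q0_mul_sq_of_conj_mul_eq (p := (sphArc1 x α s, sphArc2 x s)) hz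
    (conj_sphArc1_mul_deriv hα hσ)]
  congr 1
  have hr := (Real.exp_pos x).le
  have hnorm83 :
      ‖sphArc1 x α s‖ ^ (8/3 : ℝ) = Real.exp x ^ (4/3 : ℝ) * Real.sin s ^ (4/3 : ℝ) := by
    rw [← Real.mul_rpow hr hσ.le, ← hnorm, ← Real.rpow_natCast, ← Real.rpow_mul (norm_nonneg _)]
    norm_num
  have hexp43 : (Real.exp x ^ 2) ^ (2/3 : ℝ) = Real.exp x ^ (4/3 : ℝ) := by
    rw [← Real.rpow_natCast, ← Real.rpow_mul hr]
    norm_num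
  rw [sphArc2_sq_add_norm_sphArc1_pow_four hα hσ.le, hnorm83, hexp43]
  have : 0 < Real.exp x ^ (4/3 : ℝ) := Real.rpow_pos_of_pos (Real.exp_pos x) _
  field_simp

lemma sqrt_norm_q0_sphArc_mul_norm_deriv (hα : ‖α‖ = 1) (hs : s ∈ Ioo 0 Real.pi) :
    Real.sqrt ‖q0 (sphArc1 x α s, sphArc2 x s)‖ * ‖deriv (sphArc1 x α) s‖
      = 1 / 2 * Real.sin s ^ (-(2/3) : ℝ) := by
  have hσ : 0 < Real.sin s := Real.sin_pos_of_pos_of_lt_pi hs.1 hs.2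
  rw [sqrt_norm_mul_norm, q0_sphArc_mul_deriv_sq hα hs, Complex.norm_real,
    Real.norm_of_nonneg (by positivity), sqrt_one_div_four_mul_rpow hσ]

end SphericalArc

/-- Along the spherical arcs `γ_{x,α}`, one has
`q₀(γ_{x,α}(s))·(γ'_{x,α,1}(s))² = 1/(4 sin^{4/3} s)`; in particular each `γ_{x,α}` is a
horizontal trajectory of `q₀` and its `q₀`-length is `C = (1/2)∫₀^π sin^{−2/3}(s) ds`,
independently of `(x,α)`. -/
theorem stmt12 (x : ℝ) (α : ℂ) (hα : ‖α‖ = 1) :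
    (∀ s ∈ Set.Ioo 0 Real.pi,
      q0 (sphArc1 x α s, sphArc2 x s) * (deriv (sphArc1 x α) s) ^ 2
        = (((1 / (4 * Real.sin s ^ (4/3 : ℝ)) : ℝ)) : ℂ)) ∧
    (∫ s in Set.Ioo 0 Real.pi,
        Real.sqrt (‖q0 (sphArc1 x α s, sphArc2 x s)‖) *
          ‖deriv (sphArc1 x α) s‖)
      = (1 / 2) * ∫ s in Set.Ioo 0 Real.pi, Real.sin s ^ (-(2/3) : ℝ) := by
  refine ⟨fun s hs => q0_sphArc_mul_deriv_sq hα hs, ?_⟩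
  rw [setIntegral_congr_fun measurableSet_Ioo
    fun s hs => sqrt_norm_q0_sphArc_mul_norm_deriv hα hs]
  exact integral_const_mul _ _
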